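/- arXiv:1609.01353 — 2 statements merged into one kernel-verified Lean document; each statement's English description precedes it below -/
import Mathlib

section
/- Let T be an ℝ-tree, z ∈ T, and A ⊆ T a nonempty subset. Then there exists a unique point y ∈ T such that ⋂_{a ∈ A} [z, a] = [z, y], where [z, a] denotes the (unique) geodesic segment from z to a. -/
open Metric Set

/-- `f : S → T` is a quasi-isometry with constant `N` (a positive natural number):
every point of `T` lies within distance `N` of the image of `f`, and
`(1/N) d(x,y) - N ≤ d(f x, f y) ≤ N d(x,y) + N` for all `x y`. -/
def IsQuasiIsometryWith {S T : Type*} [MetricSpace S] [MetricSpace T]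
    (N : ℕ) (f : S → T) : Prop :=
  0 < N ∧ (∀ t : T, ∃ s : S, dist t (f s) ≤ (N : ℝ)) ∧
    ∀ x y : S, (1 / (N : ℝ)) * dist x y - N ≤ dist (f x) (f y) ∧
      dist (f x) (f y) ≤ (N : ℝ) * dist x y + N

/-- `f` is a quasi-isometry if it is a quasi-isometry with constant `N` for some `N`. -/
def IsQuasiIsometry {S T : Type*} [MetricSpace S] [MetricSpace T] (f : S → T) : Prop :=
  ∃ N : ℕ, IsQuasiIsometryWith N f
/-- `σ` is a geodesic segment from `x` to `y`: the image of an isometric embedding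
`ρ : [0, d(x,y)] → X` with `ρ 0 = x` and `ρ (d(x,y)) = y`. -/
def IsGeodesicSegment {X : Type*} [MetricSpace X] (σ : Set X) (x y : X) : Prop :=
  ∃ ρ : ℝ → X,
    (∀ s ∈ Icc (0 : ℝ) (dist x y), ∀ t ∈ Icc (0 : ℝ) (dist x y),
      dist (ρ s) (ρ t) = |s - t|) ∧
    ρ 0 = x ∧ ρ (dist x y) = y ∧ σ = ρ '' Icc (0 : ℝ) (dist x y)

/-- A metric space is geodesic if any two points are joined by a geodesic segment. -/
def IsGeodesicSpace (X : Type*) [MetricSpace X] : Prop :=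
  ∀ x y : X, ∃ σ : Set X, IsGeodesicSegment σ x y

/-- A geodesic space is `δ`-hyperbolic if for all `x, y, z` and all choices of geodesic
segments, `[x,y] ⊆ B([x,z] ∪ [y,z], δ)`. -/
def IsDeltaHyperbolic (X : Type*) [MetricSpace X] (δ : ℝ) : Prop :=
  ∀ x y z : X, ∀ σxy σxz σyz : Set X,
    IsGeodesicSegment σxy x y → IsGeodesicSegment σxz x z → IsGeodesicSegment σyz y z →
      ∀ w ∈ σxy, infDist w (σxz ∪ σyz) ≤ δ

/-- An ℝ-tree is a `0`-hyperbolic geodesic metric space. -/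
def IsRTree (X : Type*) [MetricSpace X] : Prop :=
  IsGeodesicSpace X ∧ IsDeltaHyperbolic X 0

/-- A path from `x` to `y`: a continuous map `γ : [0,1] → X` with `γ 0 = x`, `γ 1 = y`. -/
def IsPathBetween {X : Type*} [MetricSpace X] (γ : ℝ → X) (x y : X) : Prop :=
  ContinuousOn γ (Icc (0 : ℝ) 1) ∧ γ 0 = x ∧ γ 1 = y

/-!
Parametrise `[z, a₀]` isometrically by `ρ` for some `a₀ ∈ A` and let `m` be the largest
parameter with `ρ m` in every `[z, a]`. In a `0`-hyperbolic space geodesic segments are unique,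
so a segment `[z, w]` with `w ∈ [z, a]` is an initial piece of `[z, a]`; hence `ρ t` lies in
every `[z, a]` exactly when `t ≤ m`, and the intersection is `[z, ρ m]`.
-/

namespace IsGeodesicSegment

variable {X : Type*} [MetricSpace X]

lemma dist_apply_zero {ρ : ℝ → X} {L t : ℝ}
    (hρ : ∀ s ∈ Icc (0 : ℝ) L, ∀ s' ∈ Icc (0 : ℝ) L, dist (ρ s) (ρ s') = |s - s'|)
    (ht : t ∈ Icc 0 L) : dist (ρ 0) (ρ t) = t := by
  rw [hρ 0 ⟨le_rfl, ht.1.trans ht.2⟩ t ht, zero_sub, abs_neg, abs_of_nonneg ht.1]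

lemma continuousOn_of_isometric {ρ : ℝ → X} {L : ℝ}
    (hρ : ∀ s ∈ Icc (0 : ℝ) L, ∀ s' ∈ Icc (0 : ℝ) L, dist (ρ s) (ρ s') = |s - s'|) :
    ContinuousOn ρ (Icc 0 L) := by
  refine (LipschitzOnWith.of_dist_le_mul fun s hs s' hs' => ?_).continuousOn (K := 1)
  rw [hρ s hs s' hs', NNReal.coe_one, one_mul, Real.dist_eq]

lemma image_Icc {ρ : ℝ → X} {L t : ℝ}
    (hρ : ∀ s ∈ Icc (0 : ℝ) L, ∀ s' ∈ Icc (0 : ℝ) L, dist (ρ s) (ρ s') = |s - s'|)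
    (ht : t ∈ Icc 0 L) : IsGeodesicSegment (ρ '' Icc 0 t) (ρ 0) (ρ t) := by
  have hsub : Icc 0 t ⊆ Icc 0 L := Icc_subset_Icc le_rfl ht.2
  refine ⟨ρ, ?_, rfl, ?_, ?_⟩ <;> rw [dist_apply_zero hρ ht]
  exact fun s hs s' hs' => hρ s (hsub hs) s' (hsub hs')

lemma singleton (x : X) : IsGeodesicSegment {x} x x :=
  ⟨fun _ => x, fun s hs s' hs' => by
    simp only [dist_self, Icc_self, mem_singleton_iff] at hs hs' ⊢
    simp [hs, hs'], rfl, rfl, by simp⟩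

variable {σ : Set X} {x y : X}

lemma left_mem (h : IsGeodesicSegment σ x y) : x ∈ σ := by
  obtain ⟨ρ, -, hx, -, rfl⟩ := h
  exact ⟨0, left_mem_Icc.2 dist_nonneg, hx⟩

lemma right_mem (h : IsGeodesicSegment σ x y) : y ∈ σ := by
  obtain ⟨ρ, -, -, hy, rfl⟩ := h
  exact ⟨dist x y, right_mem_Icc.2 dist_nonneg, hy⟩

lemma isClosed (h : IsGeodesicSegment σ x y) : IsClosed σ := by
  obtain ⟨ρ, hρ, -, -, rfl⟩ := h
  exact (isCompact_Icc.image_of_continuousOn (continuousOn_of_isometric hρ)).isClosed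

lemma dist_le_of_mem (h : IsGeodesicSegment σ x y) {p : X} (hp : p ∈ σ) :
    dist x p ≤ dist x y := by
  obtain ⟨ρ, hρ, rfl, -, rfl⟩ := h
  obtain ⟨t, ht, rfl⟩ := hp
  rw [dist_apply_zero hρ ht]
  exact ht.2

lemma eq_of_mem_of_dist_eq (h : IsGeodesicSegment σ x y) {p : X} (hp : p ∈ σ)
    (hdist : dist x p = dist x y) : p = y := by
  obtain ⟨ρ, hρ, rfl, hy, rfl⟩ := h
  obtain ⟨t, ht, rfl⟩ := hp
  rwa [← dist_apply_zero hρ ht, hdist]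

lemma right_unique {y' : X} (h : IsGeodesicSegment σ x y) (h' : IsGeodesicSegment σ x y') :
    y = y' :=
  h'.eq_of_mem_of_dist_eq h.right_mem <|
    le_antisymm (h'.dist_le_of_mem h.right_mem) (h.dist_le_of_mem h'.right_mem)

lemma subset_of_isDeltaHyperbolic_zero (hX : IsDeltaHyperbolic X 0) {σ' : Set X}
    (h : IsGeodesicSegment σ x y) (h' : IsGeodesicSegment σ' x y) : σ ⊆ σ' := by
  intro w hw
  -- apply `0`-hyperbolicity to the degenerate triangle `x, y, y` with `[y, y] = {y}`
  have hclosed : IsClosed (σ' ∪ {y}) := h'.isClosed.union isClosed_singleton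
  have hw' : w ∈ σ' ∪ {y} :=
    (hclosed.mem_iff_infDist_zero ⟨y, Or.inr rfl⟩).2 <|
      le_antisymm (hX x y y σ σ' {y} h h' (singleton y) w hw) infDist_nonneg
  rcases hw' with hw' | rfl
  exacts [hw', h'.right_mem]

lemma eq_of_isDeltaHyperbolic_zero (hX : IsDeltaHyperbolic X 0) {σ' : Set X}
    (h : IsGeodesicSegment σ x y) (h' : IsGeodesicSegment σ' x y) : σ = σ' :=
  (h.subset_of_isDeltaHyperbolic_zero hX h').antisymm
    (h'.subset_of_isDeltaHyperbolic_zero hX h)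

lemma subset_of_mem_of_isDeltaHyperbolic_zero (hX : IsDeltaHyperbolic X 0) {τ : Set X} {w : X}
    (h : IsGeodesicSegment σ x y) (hτ : IsGeodesicSegment τ x w) (hw : w ∈ σ) : τ ⊆ σ := by
  obtain ⟨ρ, hρ, rfl, -, rfl⟩ := h
  obtain ⟨t, ht, rfl⟩ := hw
  rw [hτ.eq_of_isDeltaHyperbolic_zero hX (image_Icc hρ ht)]
  exact image_mono (Icc_subset_Icc le_rfl ht.2)

end IsGeodesicSegment

open IsGeodesicSegment in
lemma exists_isGeodesicSegment_biInter {X : Type*} [MetricSpace X] (hX : IsDeltaHyperbolic X 0)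
    {z : X} {A : Set X} (hA : A.Nonempty) {seg : X → Set X}
    (hseg : ∀ a ∈ A, IsGeodesicSegment (seg a) z a) :
    ∃ y, IsGeodesicSegment (⋂ a ∈ A, seg a) z y := by
  obtain ⟨a₀, ha₀⟩ := hA
  obtain ⟨ρ, hρ, rfl, -, hseg₀⟩ := hseg a₀ ha₀
  set M := Icc 0 (dist (ρ 0) a₀) ∩ ρ ⁻¹' ⋂ a ∈ A, seg a
  have hM_closed : IsClosed M :=
    (continuousOn_of_isometric hρ).preimage_isClosed_of_isClosed isClosed_Icc
      (isClosed_biInter fun a ha => (hseg a ha).isClosed)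
  have hM_zero : (0 : ℝ) ∈ M :=
    ⟨left_mem_Icc.2 dist_nonneg, mem_iInter₂.2 fun a ha => (hseg a ha).left_mem⟩
  have hM_bdd : BddAbove M := ⟨_, fun t ht => ht.1.2⟩
  have hm : sSup M ∈ M := hM_closed.csSup_mem ⟨0, hM_zero⟩ hM_bdd
  refine ⟨ρ (sSup M), ?_⟩
  suffices (⋂ a ∈ A, seg a) = ρ '' Icc 0 (sSup M) from this ▸ image_Icc hρ hm.1
  refine Subset.antisymm (fun p hp => ?_) (subset_iInter₂ fun a ha => ?_)
  · obtain ⟨t, ht, rfl⟩ := hseg₀ ▸ mem_iInter₂.1 hp a₀ ha₀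
    exact mem_image_of_mem ρ ⟨ht.1, le_csSup hM_bdd ⟨ht, hp⟩⟩
  · exact (hseg a ha).subset_of_mem_of_isDeltaHyperbolic_zero hX (image_Icc hρ hm.1)
      (mem_iInter₂.1 hm.2 a ha)

/-- in an ℝ-tree `T`, for `z ∈ T` and a nonempty `A ⊆ T` there is a unique
`y ∈ T` with `⋂_{a ∈ A} [z, a] = [z, y]` (geodesic segments being unique in `T`). -/
theorem rTree_inter_geodesics {T : Type*} [MetricSpace T] (hT : IsRTree T)
    (z : T) (A : Set T) (hA : A.Nonempty) :
    ∃! y : T, ∀ seg : T → Set T,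
      (∀ a ∈ A, IsGeodesicSegment (seg a) z a) →
        ∀ σ : Set T, IsGeodesicSegment σ z y → (⋂ a ∈ A, seg a) = σ := by
  obtain ⟨hgeod, hhyp⟩ := hT
  choose geo hgeo using hgeod z
  obtain ⟨y, hy⟩ := exists_isGeodesicSegment_biInter hhyp hA fun a _ => hgeo a
  refine ⟨y, fun seg hseg σ hσ => ?_, fun y' hy' => ?_⟩
  · rw [← hy.eq_of_isDeltaHyperbolic_zero hhyp hσ]
    exact iInter₂_congr fun a ha => (hseg a ha).eq_of_isDeltaHyperbolic_zero hhyp (hgeo a)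
  · obtain ⟨σ', hσ'⟩ := hgeod z y'
    have hinter : (⋂ a ∈ A, geo a) = σ' := hy' geo (fun a _ => hgeo a) σ' hσ'
    exact (hy.right_unique (hinter ▸ hσ')).symm
end

section
/- Let T be a nonempty ℝ-tree, S a metric space, f : T → S a quasi-isometry with constant N, and z ∈ T a fixed point. For x ∈ S define h(x) to be the unique point of T with [z, h(x)] = ⋂_{y₀ ∈ f⁻¹(B(x,N))} [z, y₀]. Then for every x ∈ S and every y₀ ∈ f⁻¹(B(x,N)) one has d_T(h(x), y₀) ≤ 3N². -/
open Metric Set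

lemma IsGeodesicSegment.dist_add' {X : Type*} [MetricSpace X] {σ : Set X} {x y : X}
    (h : IsGeodesicSegment σ x y) {p : X} (hp : p ∈ σ) :
    dist x p + dist p y = dist x y := by
  obtain ⟨ρ, hiso, h0, hD, hσ⟩ := h
  subst hσ
  obtain ⟨u, hu, rfl⟩ := hp
  have h0m : (0:ℝ) ∈ Icc (0:ℝ) (dist x y) := ⟨le_refl _, dist_nonneg⟩
  have hDm : dist x y ∈ Icc (0:ℝ) (dist x y) := ⟨dist_nonneg, le_refl _⟩
  have e1 := hiso 0 h0m u hu
  have e2 := hiso u hu (dist x y) hDm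
  rw [h0] at e1
  rw [hD] at e2
  rw [e1, e2, abs_of_nonpos (by linarith [hu.1]), abs_of_nonpos (by linarith [hu.2])]
  ring

lemma IsGeodesicSegment.exists_point' {X : Type*} [MetricSpace X] {σ : Set X} {x y : X}
    (h : IsGeodesicSegment σ x y) {u : ℝ} (hu : u ∈ Icc (0:ℝ) (dist x y)) :
    ∃ p ∈ σ, dist x p = u := by
  obtain ⟨ρ, hiso, h0, hD, hσ⟩ := h
  refine ⟨ρ u, by rw [hσ]; exact mem_image_of_mem _ hu, ?_⟩
  have h0m : (0:ℝ) ∈ Icc (0:ℝ) (dist x y) := ⟨le_refl _, dist_nonneg⟩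
  have e1 := hiso 0 h0m u hu
  rw [h0] at e1
  rw [e1, abs_of_nonpos (by linarith [hu.1])]
  ring

lemma IsGeodesicSegment.left_mem' {X : Type*} [MetricSpace X] {σ : Set X} {x y : X}
    (h : IsGeodesicSegment σ x y) : x ∈ σ := by
  obtain ⟨ρ, hiso, h0, hD, hσ⟩ := h
  rw [hσ, ← h0]
  exact mem_image_of_mem _ ⟨le_refl _, dist_nonneg⟩

lemma IsGeodesicSegment.right_mem' {X : Type*} [MetricSpace X] {σ : Set X} {x y : X}
    (h : IsGeodesicSegment σ x y) : y ∈ σ := by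
  obtain ⟨ρ, hiso, h0, hD, hσ⟩ := h
  rw [hσ]
  exact ⟨dist x y, ⟨dist_nonneg, le_refl _⟩, hD⟩

lemma IsGeodesicSegment.isCompact' {X : Type*} [MetricSpace X] {σ : Set X} {x y : X}
    (h : IsGeodesicSegment σ x y) : IsCompact σ := by
  obtain ⟨ρ, hiso, h0, hD, hσ⟩ := h
  rw [hσ]
  refine isCompact_Icc.image_of_continuousOn ?_
  refine (LipschitzOnWith.of_dist_le_mul (K := 1) fun s hs t ht => ?_).continuousOn
  rw [hiso s hs t ht, Real.dist_eq, NNReal.coe_one, one_mul]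

/-- In a `0`-hyperbolic space, a point on `[z, y₀]` strictly before the Gromov product
`(y₀|y₁)_z` also lies on `[z, y₁]`. -/
lemma mem_of_lt_gromov {X : Type*} [MetricSpace X] (hgeo : IsGeodesicSpace X)
    (hyp : IsDeltaHyperbolic X 0) {σ₀ σ₁ : Set X} {z y₀ y₁ p : X}
    (h₀ : IsGeodesicSegment σ₀ z y₀) (h₁ : IsGeodesicSegment σ₁ z y₁)
    (hp : p ∈ σ₀)
    (hlt : 2 * dist z p < dist z y₀ + dist z y₁ - dist y₀ y₁) : p ∈ σ₁ := by
  obtain ⟨σ', hσ'⟩ := hgeo y₀ y₁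
  have hinf := hyp z y₀ y₁ σ₀ σ₁ σ' h₀ h₁ hσ' p hp
  have hclosed : IsClosed (σ₁ ∪ σ') := (h₁.isCompact'.union hσ'.isCompact').isClosed
  have hne : (σ₁ ∪ σ').Nonempty := ⟨z, Or.inl h₁.left_mem'⟩
  have hmem : p ∈ σ₁ ∪ σ' := by
    rw [hclosed.mem_iff_infDist_zero hne]
    exact le_antisymm hinf infDist_nonneg
  rcases hmem with hm | hm
  · exact hm
  · exfalso
    have e1 := h₀.dist_add' hp
    have e2 := hσ'.dist_add' hm
    have e3 := dist_triangle z p y₁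
    have e4 : dist y₀ p = dist p y₀ := dist_comm _ _
    linarith

/-- for `f : T → S` a quasi-isometry with constant `N` from a nonempty
ℝ-tree and `h : S → T` the map defined by `[z, h x] = ⋂_{y₀ ∈ f⁻¹(B(x,N))} [z, y₀]`,
every `y₀ ∈ f⁻¹(B(x,N))` satisfies `d(h x, y₀) ≤ 3N²`. -/
theorem dist_retraction_le {T S : Type*} [MetricSpace T] [MetricSpace S] [Nonempty T]
    (hT : IsRTree T) (f : T → S) (N : ℕ) (hf : IsQuasiIsometryWith N f) (z : T)
    (h : S → T)
    (hh : ∀ x : S, ∀ seg : T → Set T,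
      (∀ y₀ ∈ f ⁻¹' closedBall x (N : ℝ), IsGeodesicSegment (seg y₀) z y₀) →
        ∃ σ : Set T, IsGeodesicSegment σ z (h x) ∧
          (⋂ y₀ ∈ f ⁻¹' closedBall x (N : ℝ), seg y₀) = σ) :
    ∀ x : S, ∀ y₀ ∈ f ⁻¹' closedBall x (N : ℝ), dist (h x) y₀ ≤ 3 * (N : ℝ) ^ 2 := by
  classical
  intro x y₀ hy₀
  have hgeo := hT.1
  choose seg hseg using fun y : T => hgeo z y
  obtain ⟨σ, hσ, hσeq⟩ := hh x seg (fun y₁ _ => hseg y₁)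
  have hNpos : (0:ℝ) < N := by exact_mod_cast hf.1
  -- all preimage points are within 3N² of each other
  have hdiam : ∀ y₁ ∈ f ⁻¹' closedBall x (N : ℝ), dist y₀ y₁ ≤ 3 * (N:ℝ)^2 := by
    intro y₁ hy₁
    have h1 := (hf.2.2 y₀ y₁).1
    have a1 : dist (f y₀) x ≤ (N:ℝ) := mem_closedBall.1 hy₀
    have a2 : dist x (f y₁) ≤ (N:ℝ) := by rw [dist_comm]; exact mem_closedBall.1 hy₁
    have htr := dist_triangle (f y₀) x (f y₁)
    have h2 : (1/(N:ℝ)) * dist y₀ y₁ ≤ 3 * N := by linarith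
    have h3 : dist y₀ y₁ = (N:ℝ) * ((1/(N:ℝ)) * dist y₀ y₁) := by
      field_simp
    rw [h3]
    calc (N:ℝ) * ((1/(N:ℝ)) * dist y₀ y₁) ≤ (N:ℝ) * (3 * N) :=
          mul_le_mul_of_nonneg_left h2 (le_of_lt hNpos)
      _ = 3 * (N:ℝ)^2 := by ring
  -- h x lies on the geodesic from z to y₀
  have hhx0 : h x ∈ seg y₀ := by
    have hhx : h x ∈ σ := hσ.right_mem'
    rw [← hσeq] at hhx
    exact mem_iInter₂.1 hhx y₀ hy₀
  have hsum := (hseg y₀).dist_add' hhx0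
  set s := dist z (h x) with hs
  set a := dist z y₀ with ha
  by_cases ht : a - 3 * (N:ℝ)^2 ≤ 0
  · have h0 : (0:ℝ) ≤ s := dist_nonneg
    linarith
  · push_neg at ht
    set t := a - 3 * (N:ℝ)^2 with htt
    have key : ∀ u : ℝ, 0 ≤ u → u < t → u ≤ s := by
      intro u hu0 hut
      obtain ⟨p, hp, hzp⟩ := (hseg y₀).exists_point'
        (u := u) ⟨hu0, by nlinarith [sq_nonneg (N:ℝ)]⟩
      have hpσ : p ∈ σ := by
        rw [← hσeq]
        refine mem_iInter₂.2 fun y₁ hy₁ => ?_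
        refine mem_of_lt_gromov hgeo hT.2 (hseg y₀) (hseg y₁) hp ?_
        have hd := hdiam y₁ hy₁
        have htri : dist z y₀ ≤ dist z y₁ + dist y₀ y₁ := by
          have := dist_triangle z y₁ y₀
          rw [dist_comm y₁ y₀] at this
          linarith
        linarith [hzp]
      have hadd := hσ.dist_add' hpσ
      have hnn : (0:ℝ) ≤ dist p (h x) := dist_nonneg
      linarith [hzp]
    have hts : t ≤ s := by
      by_contra hc
      push_neg at hc
      have h0s : (0:ℝ) ≤ s := dist_nonneg
      have := key ((s + t)/2) (by linarith) (by linarith)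
      linarith
    linarith
end
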